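/- arXiv:1812.09097 — 7 statements merged into one kernel-verified Lean document; each statement's English description precedes it below -/
import Mathlib

section
/- For all μ₁, μ₂ > 0 with μ₁ ≠ μ₂, the value v = (√2/3)·(μ₁^{3/2} − μ₂^{3/2})/(μ₁ − μ₂) satisfies h(v) = 0, where h(v) = √(√(2μ₁) + v)·(2v − √(2μ₁)) + √(√(2μ₂) + v)·(2v − √(2μ₂)). Moreover, for μ₁ = μ₂ = μ > 0, v = √(μ/2) satisfies h(v) = 0. -/
/-!
Write `a = √(2μ₁)`, `b = √(2μ₂)`. Then `√2/3 · (μ₁^{3/2} − μ₂^{3/2})/(μ₁ − μ₂)` is the secant slope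
`(a³ − b³)/(3(a² − b²)) = (a² + ab + b²)/(3(a + b))`, and for `μ₁ = μ₂` the value `√(μ/2) = a/2` is
its limit. For this `v` both `a + v` and `b + v` are perfect squares over `3(a + b)`, namely
`(2a + b)²` and `(a + 2b)²`, while `2v − a` and `2v − b` are `(b − a)(a + 2b)` and `(a − b)(2a + b)`
over `3(a + b)`, so the two terms of `h(v)` cancel.
-/

open Real

lemma sqrt_add_mul_two_mul_sub_add_eq_zero {a b v : ℝ} (ha : 0 ≤ a) (hb : 0 ≤ b)
    (hab : 0 < a + b) (hv : 3 * (a + b) * v = a ^ 2 + a * b + b ^ 2) :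
    √(a + v) * (2 * v - a) + √(b + v) * (2 * v - b) = 0 := by
  have hv : v = (a ^ 2 + a * b + b ^ 2) / (3 * (a + b)) := by
    field_simp
    linarith
  have sqrt_of_sq {c : ℝ} (hc : 0 ≤ c) (hcv : c + v = (c + (a + b)) ^ 2 / (3 * (a + b))) :
      √(c + v) = (c + (a + b)) / √(3 * (a + b)) := by
    rw [hcv, sqrt_div' _ (by positivity), sqrt_sq (by linarith)]
  rw [sqrt_of_sq ha (by rw [hv]; field_simp; ring), sqrt_of_sq hb (by rw [hv]; field_simp; ring), hv]
  field_simp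
  ring

lemma sqrt_two_mul_rpow_three_halves {μ : ℝ} (hμ : 0 ≤ μ) :
    √2 * μ ^ (3 / 2 : ℝ) = √(2 * μ) ^ 3 / 2 := by
  rw [show (3 / 2 : ℝ) = 1 + 1 / 2 by norm_num, rpow_add' hμ (by norm_num), rpow_one,
    ← sqrt_eq_rpow, sqrt_mul zero_le_two, mul_pow]
  linear_combination (-√2 * √μ) * sq_sqrt hμ + (-√2 * √μ ^ 3 / 2) * sq_sqrt zero_le_two

lemma secant_rpow_three_halves {μ₁ μ₂ : ℝ} (h₁ : 0 ≤ μ₁) (h₂ : 0 ≤ μ₂) (hne : μ₁ ≠ μ₂) :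
    3 * (√(2 * μ₁) + √(2 * μ₂)) * (√2 / 3 * (μ₁ ^ (3 / 2 : ℝ) - μ₂ ^ (3 / 2 : ℝ)) / (μ₁ - μ₂)) =
      √(2 * μ₁) ^ 2 + √(2 * μ₁) * √(2 * μ₂) + √(2 * μ₂) ^ 2 := by
  set a := √(2 * μ₁)
  set b := √(2 * μ₂)
  have hnum : √2 / 3 * (μ₁ ^ (3 / 2 : ℝ) - μ₂ ^ (3 / 2 : ℝ)) = (a ^ 3 - b ^ 3) / 6 := by
    linear_combination (sqrt_two_mul_rpow_three_halves h₁ - sqrt_two_mul_rpow_three_halves h₂) / 3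
  have hden : μ₁ - μ₂ = (a - b) * (a + b) / 2 := by
    linear_combination (sq_sqrt (by positivity : (0 : ℝ) ≤ 2 * μ₂) -
      sq_sqrt (by positivity : (0 : ℝ) ≤ 2 * μ₁)) / 2
  obtain ⟨hsub, hadd⟩ : a - b ≠ 0 ∧ a + b ≠ 0 := by
    rw [← mul_ne_zero_iff]
    intro h
    exact hne (by linarith [hden, h])
  rw [hnum, hden]
  field_simp
  ring

theorem stmt_2 (μ₁ μ₂ : ℝ) (h₁ : 0 < μ₁) (h₂ : 0 < μ₂) :
    (μ₁ ≠ μ₂ →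
      Real.sqrt (Real.sqrt (2 * μ₁) + (Real.sqrt 2 / 3 * (μ₁ ^ (3 / 2 : ℝ) - μ₂ ^ (3 / 2 : ℝ)) / (μ₁ - μ₂))) *
          (2 * (Real.sqrt 2 / 3 * (μ₁ ^ (3 / 2 : ℝ) - μ₂ ^ (3 / 2 : ℝ)) / (μ₁ - μ₂)) - Real.sqrt (2 * μ₁)) +
        Real.sqrt (Real.sqrt (2 * μ₂) + (Real.sqrt 2 / 3 * (μ₁ ^ (3 / 2 : ℝ) - μ₂ ^ (3 / 2 : ℝ)) / (μ₁ - μ₂))) *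
          (2 * (Real.sqrt 2 / 3 * (μ₁ ^ (3 / 2 : ℝ) - μ₂ ^ (3 / 2 : ℝ)) / (μ₁ - μ₂)) - Real.sqrt (2 * μ₂)) = 0) ∧
    (μ₁ = μ₂ →
      Real.sqrt (Real.sqrt (2 * μ₁) + Real.sqrt (μ₁ / 2)) * (2 * Real.sqrt (μ₁ / 2) - Real.sqrt (2 * μ₁)) +
        Real.sqrt (Real.sqrt (2 * μ₂) + Real.sqrt (μ₁ / 2)) * (2 * Real.sqrt (μ₁ / 2) - Real.sqrt (2 * μ₂)) = 0) := by
  have ha : 0 < √(2 * μ₁) := sqrt_pos.mpr (by positivity)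
  have hb : 0 < √(2 * μ₂) := sqrt_pos.mpr (by positivity)
  refine ⟨fun hne => ?_, ?_⟩
  · exact sqrt_add_mul_two_mul_sub_add_eq_zero ha.le hb.le (by positivity)
      (secant_rpow_three_halves h₁.le h₂.le hne)
  · rintro rfl
    have hhalf : √(μ₁ / 2) = √(2 * μ₁) / 2 := by
      rw [show μ₁ / 2 = 2 * μ₁ / 2 ^ 2 by ring, sqrt_div' _ (by positivity), sqrt_sq zero_le_two]
    rw [hhalf]
    exact sqrt_add_mul_two_mul_sub_add_eq_zero ha.le ha.le (by positivity) (by ring)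
end

section
/- For any fixed μ₁, μ₂ ≥ 0, the function h(v) = √(√(2μ₁)+v)·(2v−√(2μ₁)) + √(√(2μ₂)+v)·(2v−√(2μ₂)) is strictly monotone increasing on [0,∞), so for each λ ≥ 0 the equation h(v) = √6·λ has at most one solution v ≥ 0. -/
open Real Set

/-- With `p = √(a + v)` the function is the cubic `2p³ - 3ap`, increasing once `2p² ≥ a`,
i.e. once `v ≥ -a/2`. -/
lemma strictMonoOn_sqrt_add_mul_two_mul_sub (a : ℝ) (ha : 0 ≤ a) :
    StrictMonoOn (fun v : ℝ => √(a + v) * (2 * v - a)) (Ici (-a / 2)) := by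
  intro x hx y hy hxy
  simp only [mem_Ici] at hx hy
  set p := √(a + x)
  set q := √(a + y)
  have hp : p ^ 2 = a + x := sq_sqrt (by linarith)
  have hq : q ^ 2 = a + y := sq_sqrt (by linarith)
  have hp0 : 0 ≤ p := sqrt_nonneg _
  have hpq : p < q := sqrt_lt_sqrt (by linarith) (by linarith)
  have hfactor : q * (2 * y - a) - p * (2 * x - a) =
      (q - p) * (2 * (q ^ 2 + q * p + p ^ 2) - 3 * a) := by
    rw [show 2 * y - a = 2 * q ^ 2 - 3 * a by rw [hq]; ring,
      show 2 * x - a = 2 * p ^ 2 - 3 * a by rw [hp]; ring]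
    ring
  have hsecond : 0 < 2 * (q ^ 2 + q * p + p ^ 2) - 3 * a := by nlinarith
  nlinarith [mul_pos (sub_pos.2 hpq) hsecond]

theorem stmt_3_general (μ₁ μ₂ : ℝ) :
    StrictMonoOn (fun v : ℝ =>
      Real.sqrt (Real.sqrt (2 * μ₁) + v) * (2 * v - Real.sqrt (2 * μ₁)) +
      Real.sqrt (Real.sqrt (2 * μ₂) + v) * (2 * v - Real.sqrt (2 * μ₂))) (Set.Ici 0) ∧
    ∀ lam : ℝ, 0 ≤ lam → ∀ v₁ v₂ : ℝ, 0 ≤ v₁ → 0 ≤ v₂ →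
      Real.sqrt (Real.sqrt (2 * μ₁) + v₁) * (2 * v₁ - Real.sqrt (2 * μ₁)) +
        Real.sqrt (Real.sqrt (2 * μ₂) + v₁) * (2 * v₁ - Real.sqrt (2 * μ₂)) = Real.sqrt 6 * lam →
      Real.sqrt (Real.sqrt (2 * μ₁) + v₂) * (2 * v₂ - Real.sqrt (2 * μ₁)) +
        Real.sqrt (Real.sqrt (2 * μ₂) + v₂) * (2 * v₂ - Real.sqrt (2 * μ₂)) = Real.sqrt 6 * lam →
      v₁ = v₂ := by
  have hmono (μ : ℝ) :
      StrictMonoOn (fun v : ℝ => √(√(2 * μ) + v) * (2 * v - √(2 * μ))) (Ici 0) :=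
    (strictMonoOn_sqrt_add_mul_two_mul_sub _ (sqrt_nonneg _)).mono
      (Ici_subset_Ici.2 (by linarith [sqrt_nonneg (2 * μ)]))
  have hsum := (hmono μ₁).add (hmono μ₂)
  refine ⟨hsum, fun lam _ v₁ v₂ hv₁ hv₂ he₁ he₂ => hsum.injOn hv₁ hv₂ ?_⟩
  simpa using he₁.trans he₂.symm

theorem stmt_3 (μ₁ μ₂ : ℝ) (h₁ : 0 ≤ μ₁) (h₂ : 0 ≤ μ₂) :
    StrictMonoOn (fun v : ℝ =>
      Real.sqrt (Real.sqrt (2 * μ₁) + v) * (2 * v - Real.sqrt (2 * μ₁)) +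
      Real.sqrt (Real.sqrt (2 * μ₂) + v) * (2 * v - Real.sqrt (2 * μ₂))) (Set.Ici 0) ∧
    ∀ lam : ℝ, 0 ≤ lam → ∀ v₁ v₂ : ℝ, 0 ≤ v₁ → 0 ≤ v₂ →
      Real.sqrt (Real.sqrt (2 * μ₁) + v₁) * (2 * v₁ - Real.sqrt (2 * μ₁)) +
        Real.sqrt (Real.sqrt (2 * μ₂) + v₁) * (2 * v₁ - Real.sqrt (2 * μ₂)) = Real.sqrt 6 * lam →
      Real.sqrt (Real.sqrt (2 * μ₁) + v₂) * (2 * v₂ - Real.sqrt (2 * μ₁)) +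
        Real.sqrt (Real.sqrt (2 * μ₂) + v₂) * (2 * v₂ - Real.sqrt (2 * μ₂)) = Real.sqrt 6 * lam →
      v₁ = v₂ :=
  stmt_3_general μ₁ μ₂
end

section
/- Define g(s₁, s₂) = (1/(2√(2π)))·(s₁ + s₂)^{−5/2} for s₁, s₂ > 0. Then for all μ₁, μ₂ > 0 with μ₁ ≠ μ₂, the double integral ∫₀^∞∫₀^∞ g(s₁,s₂)(1 − e^{−μ₁s₁−μ₂s₂}) ds₁ ds₂ equals (√2/3)·(μ₁^{3/2} − μ₂^{3/2})/(μ₁ − μ₂). -/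
/-!
Substituting `t = s₁ + s₂` and integrating over `s₁ ∈ (0, t)` first (Fubini on the triangle
`0 < s₁ < t`) leaves an elementary inner integral, and the double integral becomes
`(μ₁ - μ₂)⁻¹ ∫₀^∞ t^(-5/2) (φ(μ₁ t) - φ(μ₂ t)) dt` with `φ(y) = y - 1 + e^(-y)`.
Since `φ(y) = O(y²)` at `0` and `O(y)` at `∞`, two integrations by parts against powers of `t`
have no boundary terms and give
`∫₀^∞ t^(-5/2) φ(p t) dt = (4/3) p² ∫₀^∞ t^(-1/2) e^(-p t) dt = (4/3) Γ(1/2) p^(3/2)`.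
-/

open MeasureTheory Real Set Filter Topology Function

section PowerWeights

variable {s a b C₀ C₁ : ℝ} {f f' : ℝ → ℝ}

lemma abs_rpow_mul_le {x y c : ℝ} (hx : 0 < x) (hy : |y| ≤ c * x ^ a) :
    |x ^ s * y| ≤ c * x ^ (s + a) := by
  rw [abs_mul, abs_of_pos (rpow_pos_of_pos hx s), rpow_add hx]
  calc x ^ s * |y| ≤ x ^ s * (c * x ^ a) := by gcongr
    _ = c * (x ^ s * x ^ a) := by ring

lemma integrableOn_rpow_mul_Ioi (hf : ContinuousOn f (Ioi 0)) (ha : -1 < s + a)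
    (hb : s + b < -1) (h₀ : ∀ x ∈ Ioi 0, |f x| ≤ C₀ * x ^ a)
    (h₁ : ∀ x ∈ Ioi 0, |f x| ≤ C₁ * x ^ b) :
    IntegrableOn (fun x ↦ x ^ s * f x) (Ioi 0) := by
  have hcont : ContinuousOn (fun x ↦ x ^ s * f x) (Ioi 0) :=
    (continuousOn_id.rpow_const fun x hx ↦ Or.inl (ne_of_gt hx)).mul hf
  rw [← Ioc_union_Ioi_eq_Ioi zero_le_one]
  refine IntegrableOn.union ?_ ?_
  · have hdom : IntegrableOn (fun x : ℝ ↦ C₀ * x ^ (s + a)) (Ioc 0 1) :=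
      (intervalIntegral.intervalIntegrable_rpow' ha (a := 0) (b := 1)).1.const_mul C₀
    refine hdom.mono' ((hcont.mono Ioc_subset_Ioi_self).aestronglyMeasurable measurableSet_Ioc)
      ((ae_restrict_iff' measurableSet_Ioc).2 (Eventually.of_forall fun x hx ↦ ?_))
    exact abs_rpow_mul_le hx.1 (h₀ x hx.1)
  · have hdom : IntegrableOn (fun x : ℝ ↦ C₁ * x ^ (s + b)) (Ioi 1) :=
      (integrableOn_Ioi_rpow_of_lt hb zero_lt_one).const_mul C₁
    refine hdom.mono' ((hcont.mono (Ioi_subset_Ioi zero_le_one)).aestronglyMeasurable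
      measurableSet_Ioi) ((ae_restrict_iff' measurableSet_Ioi).2 (Eventually.of_forall
        fun x (hx : 1 < x) ↦ ?_))
    have hx₀ : (0 : ℝ) < x := zero_lt_one.trans hx
    exact abs_rpow_mul_le hx₀ (h₁ x hx₀)

lemma tendsto_rpow_mul_nhdsGT_zero (ha : 0 < s + a) (h₀ : ∀ x ∈ Ioi 0, |f x| ≤ C₀ * x ^ a) :
    Tendsto (fun x ↦ x ^ s * f x) (𝓝[>] 0) (𝓝 0) := by
  have hc : ContinuousAt (fun x : ℝ ↦ C₀ * x ^ (s + a)) 0 :=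
    (continuousAt_id.rpow_const (Or.inr ha.le)).const_mul C₀
  have hlim : Tendsto (fun x : ℝ ↦ C₀ * x ^ (s + a)) (𝓝[>] 0) (𝓝 (C₀ * 0 ^ (s + a))) :=
    hc.tendsto.mono_left nhdsWithin_le_nhds
  rw [zero_rpow ha.ne', mul_zero] at hlim
  refine squeeze_zero_norm' ?_ hlim
  filter_upwards [self_mem_nhdsWithin] with x hx
  exact abs_rpow_mul_le hx (h₀ x hx)

lemma tendsto_rpow_mul_atTop (hb : s + b < 0) (h₁ : ∀ x ∈ Ioi 0, |f x| ≤ C₁ * x ^ b) :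
    Tendsto (fun x ↦ x ^ s * f x) atTop (𝓝 0) := by
  have hlim : Tendsto (fun x : ℝ ↦ C₁ * x ^ (s + b)) atTop (𝓝 0) := by
    simpa using (tendsto_rpow_neg_atTop (neg_pos.2 hb)).const_mul C₁
  refine squeeze_zero_norm' ?_ hlim
  filter_upwards [eventually_gt_atTop 0] with x hx
  exact abs_rpow_mul_le hx (h₁ x hx)

theorem integral_rpow_sub_one_mul_Ioi (hs : s ≠ 0) (hf : ∀ x ∈ Ioi 0, HasDerivAt f (f' x) x)
    (ha : 0 < s + a) (hb : s + b < 0) (h₀ : ∀ x ∈ Ioi 0, |f x| ≤ C₀ * x ^ a)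
    (h₁ : ∀ x ∈ Ioi 0, |f x| ≤ C₁ * x ^ b)
    (hf' : IntegrableOn (fun x ↦ x ^ s * f' x) (Ioi 0)) :
    ∫ x in Ioi 0, x ^ (s - 1) * f x = -(∫ x in Ioi 0, x ^ s * f' x) / s := by
  have hu : ∀ x ∈ Ioi (0 : ℝ), HasDerivAt (fun x ↦ x ^ s / s) (x ^ (s - 1)) x := fun x hx ↦
    ((hasDerivAt_rpow_const (Or.inl (ne_of_gt hx))).div_const s).congr_deriv (by field_simp)
  have hfc : ContinuousOn f (Ioi 0) := fun x hx ↦ (hf x hx).continuousAt.continuousWithinAt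
  have hparts := integral_Ioi_mul_deriv_eq_deriv_mul hu hf
    (IntegrableOn.congr_fun (hf'.div_const s) (fun x _ ↦ (div_mul_eq_mul_div _ _ _).symm)
      measurableSet_Ioi)
    (integrableOn_rpow_mul_Ioi hfc (by linarith) (by linarith) h₀ h₁)
    (by simpa only [Pi.mul_def, div_mul_eq_mul_div, zero_div] using
      (tendsto_rpow_mul_nhdsGT_zero ha h₀).div_const s)
    (by simpa only [Pi.mul_def, div_mul_eq_mul_div, zero_div] using
      (tendsto_rpow_mul_atTop hb h₁).div_const s)
  simp only [div_mul_eq_mul_div, integral_div, sub_self, zero_sub] at hparts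
  rw [neg_div, hparts, neg_neg]

end PowerWeights

section ExpRemainders

variable {y p : ℝ}

lemma abs_one_sub_exp_neg_le (hy : 0 ≤ y) : |1 - exp (-y)| ≤ y := by
  rw [abs_of_nonneg (sub_nonneg.2 (exp_le_one_iff.2 (neg_nonpos.2 hy)))]
  linarith [add_one_le_exp (-y)]

lemma abs_one_sub_exp_neg_le_one (hy : 0 ≤ y) : |1 - exp (-y)| ≤ 1 := by
  rw [abs_of_nonneg (sub_nonneg.2 (exp_le_one_iff.2 (neg_nonpos.2 hy)))]
  linarith [exp_pos (-y)]

lemma abs_sub_one_add_exp_neg_le (hy : 0 ≤ y) : |y - 1 + exp (-y)| ≤ y := by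
  rw [abs_of_nonneg (by linarith [add_one_le_exp (-y)])]
  linarith [exp_le_one_iff.2 (neg_nonpos.2 hy)]

lemma abs_sub_one_add_exp_neg_le_sq (hy : 0 ≤ y) : |y - 1 + exp (-y)| ≤ y ^ 2 := by
  rcases le_total y 1 with hy₁ | hy₁
  · have h := abs_exp_sub_one_sub_id_le (x := -y) (by rwa [abs_neg, abs_of_nonneg hy])
    rw [neg_sq] at h
    convert h using 2
    ring
  · nlinarith [abs_sub_one_add_exp_neg_le hy]

lemma integral_rpow_neg_one_half_mul_exp_neg_mul (hp : 0 < p) :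
    ∫ x in Ioi 0, x ^ (-(1 / 2) : ℝ) * exp (-(p * x)) = √π / √p := by
  have h := integral_rpow_mul_exp_neg_mul_Ioi one_half_pos hp
  rw [Gamma_one_half_eq, show (1 / 2 : ℝ) - 1 = -(1 / 2) by norm_num] at h
  rw [h, ← sqrt_eq_rpow, one_div, sqrt_inv, inv_mul_eq_div]

lemma integral_rpow_neg_three_halves_mul_one_sub_exp_neg_mul (hp : 0 < p) :
    ∫ x in Ioi 0, x ^ (-(3 / 2) : ℝ) * (1 - exp (-(p * x))) = 2 * √π * √p := by
  have hderiv : ∀ x ∈ Ioi (0 : ℝ),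
      HasDerivAt (fun x ↦ 1 - exp (-(p * x))) (exp (-(p * x)) * p) x := fun x _ ↦ by
    simpa using (((hasDerivAt_id x).const_mul p).neg.exp).const_sub 1
  have hint : IntegrableOn (fun x ↦ x ^ (-(1 / 2) : ℝ) * (exp (-(p * x)) * p)) (Ioi 0) := by
    have h := (integrableOn_rpow_mul_exp_neg_mul_rpow (s := -(1 / 2)) (by norm_num) one_pos
      hp).mul_const p
    simp only [mul_assoc, rpow_one, neg_mul] at h
    exact h
  have h := integral_rpow_sub_one_mul_Ioi (s := -(1 / 2)) (a := 1) (b := 0) (C₀ := p)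
    (C₁ := 1) (by norm_num) hderiv (by norm_num) (by norm_num)
    (fun x hx ↦ by simpa using abs_one_sub_exp_neg_le (mul_pos hp hx).le)
    (fun x hx ↦ by simpa using abs_one_sub_exp_neg_le_one (mul_pos hp hx).le) hint
  simp_rw [← mul_assoc, integral_mul_const, integral_rpow_neg_one_half_mul_exp_neg_mul hp] at h
  rw [show (-(1 / 2) : ℝ) - 1 = -(3 / 2) by norm_num] at h
  rw [h, div_mul_eq_mul_div, mul_div_assoc, div_sqrt]
  ring

lemma integrableOn_rpow_neg_three_halves_mul_one_sub_exp_neg_mul (hp : 0 < p) :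
    IntegrableOn (fun x ↦ x ^ (-(3 / 2) : ℝ) * (1 - exp (-(p * x)))) (Ioi 0) :=
  integrableOn_rpow_mul_Ioi (a := 1) (b := 0) (C₀ := p) (C₁ := 1) (by fun_prop)
    (by norm_num) (by norm_num)
    (fun x hx ↦ by simpa using abs_one_sub_exp_neg_le (mul_pos hp hx).le)
    (fun x hx ↦ by simpa using abs_one_sub_exp_neg_le_one (mul_pos hp hx).le)

lemma integrableOn_rpow_neg_five_halves_mul_sub_one_add_exp_neg_mul (hp : 0 < p) :
    IntegrableOn (fun x ↦ x ^ (-(5 / 2) : ℝ) * (p * x - 1 + exp (-(p * x)))) (Ioi 0) :=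
  integrableOn_rpow_mul_Ioi (a := 2) (b := 1) (C₀ := p ^ 2) (C₁ := p) (by fun_prop)
    (by norm_num) (by norm_num)
    (fun x hx ↦ by simpa [mul_pow] using abs_sub_one_add_exp_neg_le_sq (mul_pos hp hx).le)
    (fun x hx ↦ by simpa using abs_sub_one_add_exp_neg_le (mul_pos hp hx).le)

lemma integral_rpow_neg_five_halves_mul_sub_one_add_exp_neg_mul (hp : 0 < p) :
    ∫ x in Ioi 0, x ^ (-(5 / 2) : ℝ) * (p * x - 1 + exp (-(p * x))) =
      4 / 3 * √π * p ^ (3 / 2 : ℝ) := by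
  have hderiv : ∀ x ∈ Ioi (0 : ℝ), HasDerivAt (fun x ↦ p * x - 1 + exp (-(p * x)))
      (p * (1 - exp (-(p * x)))) x := fun x _ ↦ by
    have hlin := (hasDerivAt_id' x).const_mul p
    exact ((hlin.sub_const 1).add hlin.neg.exp).congr_deriv (by simp only [Pi.neg_apply]; ring)
  have h := integral_rpow_sub_one_mul_Ioi (s := -(3 / 2)) (a := 2) (b := 1) (C₀ := p ^ 2)
    (C₁ := p) (by norm_num) hderiv (by norm_num) (by norm_num)
    (fun x hx ↦ by simpa [mul_pow] using abs_sub_one_add_exp_neg_le_sq (mul_pos hp hx).le)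
    (fun x hx ↦ by simpa using abs_sub_one_add_exp_neg_le (mul_pos hp hx).le)
    (IntegrableOn.congr_fun
      ((integrableOn_rpow_neg_three_halves_mul_one_sub_exp_neg_mul hp).const_mul p)
      (fun x _ ↦ mul_left_comm _ _ _) measurableSet_Ioi)
  simp_rw [mul_left_comm _ p, integral_const_mul,
    integral_rpow_neg_three_halves_mul_one_sub_exp_neg_mul hp] at h
  rw [show (-(3 / 2) : ℝ) - 1 = -(5 / 2) by norm_num] at h
  rw [h, show (3 / 2 : ℝ) = 1 + 1 / 2 by norm_num, rpow_add hp, rpow_one, ← sqrt_eq_rpow]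
  ring

end ExpRemainders

def triangle : Set (ℝ × ℝ) := {q | 0 < q.1 ∧ q.1 < q.2}

lemma measurableSet_triangle : MeasurableSet triangle :=
  (measurableSet_lt measurable_const measurable_fst).inter
    (measurableSet_lt measurable_fst measurable_snd)

lemma indicator_triangle_section {E : Type*} [Zero E] (F : ℝ → ℝ → E) (t : ℝ) :
    (fun s ↦ triangle.indicator (uncurry F) (s, t)) = (Ioo 0 t).indicator (F · t) := rfl

section Triangle

variable {E : Type*} [NormedAddCommGroup E] [NormedSpace ℝ E]

lemma integral_indicator_triangle_section (F : ℝ → ℝ → E) (t : ℝ) :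
    ∫ s, triangle.indicator (uncurry F) (s, t) =
      (Ioi 0).indicator (fun t ↦ ∫ s in 0..t, F s t) t := by
  rw [indicator_triangle_section, integral_indicator measurableSet_Ioo]
  rcases le_or_gt t 0 with ht | ht
  · rw [Ioo_eq_empty (not_lt.2 ht), Measure.restrict_empty, integral_zero_measure,
      indicator_of_notMem (show t ∉ Ioi 0 from not_lt.2 ht)]
  · rw [indicator_of_mem (show t ∈ Ioi 0 from ht), intervalIntegral.integral_of_le ht.le,
      integral_Ioc_eq_integral_Ioo]

lemma integral_Ioi_comp_const_add (g : ℝ → E) (s : ℝ) :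
    ∫ u in Ioi 0, g (s + u) = ∫ t in Ioi s, g t := by
  have h := (measurePreserving_add_left volume s).setIntegral_preimage_emb
    (measurableEmbedding_addLeft s) g (Ioi s)
  rwa [preimage_const_add_Ioi, sub_self] at h

theorem integral_Ioi_integral_Ioi_add_eq {F : ℝ → ℝ → E}
    (hF : IntegrableOn (uncurry F) triangle) :
    ∫ s in Ioi 0, ∫ u in Ioi 0, F s (s + u) = ∫ t in Ioi 0, ∫ s in 0..t, F s t := by
  have hsection : ∀ s ∈ Ioi (0 : ℝ),
      ∫ u in Ioi 0, F s (s + u) = ∫ t, triangle.indicator (uncurry F) (s, t) := by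
    intro s hs
    rw [integral_Ioi_comp_const_add (F s), ← integral_indicator measurableSet_Ioi]
    congr 1 with t
    simp [triangle, indicator_apply, mem_Ioi.1 hs]
  calc ∫ s in Ioi 0, ∫ u in Ioi 0, F s (s + u)
      = ∫ s in Ioi 0, ∫ t, triangle.indicator (uncurry F) (s, t) :=
        setIntegral_congr_fun measurableSet_Ioi hsection
    _ = ∫ s, ∫ t, triangle.indicator (uncurry F) (s, t) := by
        refine setIntegral_eq_integral_of_forall_compl_eq_zero fun s hs ↦ ?_
        simp [triangle, show ¬0 < s from hs]
    _ = ∫ t, ∫ s, triangle.indicator (uncurry F) (s, t) :=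
        integral_integral_swap ((integrable_indicator_iff measurableSet_triangle).2 hF)
    _ = ∫ t in Ioi 0, ∫ s in 0..t, F s t := by
        simp_rw [integral_indicator_triangle_section]
        exact integral_indicator measurableSet_Ioi

end Triangle

lemma integrableOn_triangle_of_nonneg {F : ℝ → ℝ → ℝ} (hm : Measurable (uncurry F))
    (hsection : ∀ t, IntegrableOn (F · t) (Ioo 0 t))
    (hnonneg : ∀ s t, 0 < s → s < t → 0 ≤ F s t)
    (hint : IntegrableOn (fun t ↦ ∫ s in 0..t, F s t) (Ioi 0)) :
    IntegrableOn (uncurry F) triangle := by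
  rw [← integrable_indicator_iff measurableSet_triangle, Measure.volume_eq_prod,
    integrable_prod_iff' (hm.indicator measurableSet_triangle).aestronglyMeasurable]
  refine ⟨Eventually.of_forall fun t ↦ ?_, ?_⟩
  · rw [indicator_triangle_section]
    exact (hsection t).integrable_indicator measurableSet_Ioo
  · have hnorm : ∀ q, ‖triangle.indicator (uncurry F) q‖ = triangle.indicator (uncurry F) q :=
      fun q ↦ norm_of_nonneg (indicator_nonneg (fun q hq ↦ hnonneg q.1 q.2 hq.1 hq.2) q)
    simp_rw [hnorm, integral_indicator_triangle_section]
    exact (integrable_indicator_iff measurableSet_Ioi).2 hint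

section Kernel

variable {μ₁ μ₂ : ℝ}

lemma integral_one_sub_exp_neg_mul_sub (hne : μ₁ ≠ μ₂) (t : ℝ) :
    ∫ s in 0..t, (1 - exp (-μ₁ * s - μ₂ * (t - s))) =
      ((μ₁ * t - 1 + exp (-(μ₁ * t))) - (μ₂ * t - 1 + exp (-(μ₂ * t)))) / (μ₁ - μ₂) := by
  have hderiv : ∀ s ∈ uIcc 0 t, HasDerivAt
      (fun s ↦ s - exp (-μ₁ * s - μ₂ * (t - s)) / (μ₂ - μ₁))
      (1 - exp (-μ₁ * s - μ₂ * (t - s))) s := fun s _ ↦ by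
    have harg : HasDerivAt (fun s ↦ -μ₁ * s - μ₂ * (t - s)) (μ₂ - μ₁) s :=
      (((hasDerivAt_id' s).const_mul (-μ₁)).sub
        (((hasDerivAt_id' s).const_sub t).const_mul μ₂)).congr_deriv (by ring)
    exact ((hasDerivAt_id' s).sub (harg.exp.div_const _)).congr_deriv (by field_simp)
  rw [intervalIntegral.integral_eq_sub_of_hasDerivAt hderiv
    (Continuous.intervalIntegrable (by fun_prop) _ _)]
  simp only [sub_self, mul_zero, sub_zero, zero_sub, neg_mul]
  field_simp
  ring

theorem integral_Ioi_integral_Ioi_rpow_mul_one_sub_exp (h₁ : 0 < μ₁) (h₂ : 0 < μ₂)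
    (hne : μ₁ ≠ μ₂) :
    ∫ s₁ in Ioi 0, ∫ s₂ in Ioi 0, (s₁ + s₂) ^ (-(5 / 2) : ℝ) * (1 - exp (-μ₁ * s₁ - μ₂ * s₂)) =
      4 / 3 * √π * (μ₁ ^ (3 / 2 : ℝ) - μ₂ ^ (3 / 2 : ℝ)) / (μ₁ - μ₂) := by
  set F : ℝ → ℝ → ℝ := fun s t ↦ t ^ (-(5 / 2) : ℝ) * (1 - exp (-μ₁ * s - μ₂ * (t - s)))
  have hinner : ∀ t, ∫ s in 0..t, F s t = (μ₁ - μ₂)⁻¹ *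
      (t ^ (-(5 / 2) : ℝ) * (μ₁ * t - 1 + exp (-(μ₁ * t))) -
        t ^ (-(5 / 2) : ℝ) * (μ₂ * t - 1 + exp (-(μ₂ * t)))) := fun t ↦ by
    rw [intervalIntegral.integral_const_mul, integral_one_sub_exp_neg_mul_sub hne]
    ring
  have hI₁ := integrableOn_rpow_neg_five_halves_mul_sub_one_add_exp_neg_mul h₁
  have hI₂ := integrableOn_rpow_neg_five_halves_mul_sub_one_add_exp_neg_mul h₂
  have hF : IntegrableOn (uncurry F) triangle := by
    refine integrableOn_triangle_of_nonneg (by fun_prop) (fun t ↦ ?_) (fun s t hs hst ↦ ?_) ?_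
    · exact ((by fun_prop : Continuous (F · t)).integrableOn_Icc).mono_set Ioo_subset_Icc_self
    · have : -μ₁ * s - μ₂ * (t - s) ≤ 0 := by nlinarith
      exact mul_nonneg (rpow_nonneg (hs.trans hst).le _) (sub_nonneg.2 (exp_le_one_iff.2 this))
    · simp_rw [hinner]
      exact (hI₁.sub hI₂).const_mul _
  calc _ = ∫ s in Ioi 0, ∫ u in Ioi 0, F s (s + u) := by simp only [F, add_sub_cancel_left]
    _ = ∫ t in Ioi 0, ∫ s in 0..t, F s t := integral_Ioi_integral_Ioi_add_eq hF
    _ = _ := by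
      simp_rw [hinner]
      rw [integral_const_mul, integral_sub hI₁ hI₂,
        integral_rpow_neg_five_halves_mul_sub_one_add_exp_neg_mul h₁,
        integral_rpow_neg_five_halves_mul_sub_one_add_exp_neg_mul h₂]
      ring

end Kernel

theorem stmt_5 (μ₁ μ₂ : ℝ) (h₁ : 0 < μ₁) (h₂ : 0 < μ₂) (hne : μ₁ ≠ μ₂) :
    ∫ s₁ in Set.Ioi (0 : ℝ), ∫ s₂ in Set.Ioi (0 : ℝ),
        (1 / (2 * Real.sqrt (2 * Real.pi))) * (s₁ + s₂) ^ (-(5 / 2) : ℝ) *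
          (1 - Real.exp (-μ₁ * s₁ - μ₂ * s₂)) =
      Real.sqrt 2 / 3 * (μ₁ ^ (3 / 2 : ℝ) - μ₂ ^ (3 / 2 : ℝ)) / (μ₁ - μ₂) := by
  simp_rw [mul_assoc, integral_const_mul]
  rw [integral_Ioi_integral_Ioi_rpow_mul_one_sub_exp h₁ h₂ hne, sqrt_mul zero_le_two]
  field_simp
  rw [sq_sqrt zero_le_two]
  ring
end

section
/- Let T be a positive random variable with Laplace transform E[e^{−λT}] = exp(−λ^{2/3}) for all λ ≥ 0 (a positive stable variable of index 2/3). Then for every integer n ≥ 1, E[T^{−n/2}] = Γ(3n/4 + 1)/Γ(n/2 + 1). -/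
/-!
Integrating `Γ(a) t^{-a} = ∫₀^∞ s^{a-1} e^{-st} ds` against the law of `T` and swapping the
integrals (Tonelli) gives `Γ(a) E[T^{-a}] = ∫₀^∞ s^{a-1} E[e^{-sT}] ds = ∫₀^∞ s^{a-1} e^{-s^α} ds`,
and the last integral is `Γ(a/α)/α` by the substitution `u = s^α`. For `α = 2/3`, `a = n/2` this
is `(3/2) Γ(3n/4) / Γ(n/2) = Γ(3n/4 + 1) / Γ(n/2 + 1)`.
-/

open MeasureTheory Real Set

lemma ofReal_integral_eq_lintegral_ofReal_of_ne_zero {α : Type*} [MeasurableSpace α]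
    {μ : Measure α} {f : α → ℝ} (hf : 0 ≤ᵐ[μ] f) (h : ∫ x, f x ∂μ ≠ 0) :
    ENNReal.ofReal (∫ x, f x ∂μ) = ∫⁻ x, ENNReal.ofReal (f x) ∂μ :=
  ofReal_integral_eq_lintegral_ofReal (.of_integral_ne_zero h) hf

lemma lintegral_rpow_mul_exp_neg_mul_Ioi {a t : ℝ} (ha : 0 < a) (ht : 0 < t) :
    ∫⁻ s in Ioi 0, ENNReal.ofReal (s ^ (a - 1) * exp (-s * t)) =
      ENNReal.ofReal (Gamma a * t ^ (-a)) := by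
  have hval : ∫ s in Ioi 0, s ^ (a - 1) * exp (-s * t) = Gamma a * t ^ (-a) := by
    calc ∫ s in Ioi 0, s ^ (a - 1) * exp (-s * t)
        = ∫ s in Ioi 0, s ^ (a - 1) * exp (-(t * s)) :=
          setIntegral_congr_fun measurableSet_Ioi fun s _ ↦ by ring_nf
      _ = Gamma a * t ^ (-a) := by
          rw [integral_rpow_mul_exp_neg_mul_Ioi ha ht, one_div, inv_rpow ht.le,
            ← rpow_neg ht.le, mul_comm]
  have hnonneg : 0 ≤ᵐ[volume.restrict (Ioi 0)] fun s : ℝ ↦ s ^ (a - 1) * exp (-s * t) :=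
    (ae_restrict_iff' measurableSet_Ioi).mpr <| .of_forall fun s (hs : 0 < s) ↦ by positivity
  rw [← hval, ofReal_integral_eq_lintegral_ofReal_of_ne_zero hnonneg
    (hval ▸ (mul_pos (Gamma_pos_of_pos ha) (rpow_pos_of_pos ht _)).ne')]

lemma lintegral_rpow_mul_exp_neg_rpow_Ioi {α a : ℝ} (hα : 0 < α) (ha : 0 < a) :
    ∫⁻ s in Ioi 0, ENNReal.ofReal (s ^ (a - 1) * exp (-s ^ α)) =
      ENNReal.ofReal (Gamma (a / α) / α) := by
  have hval : ∫ s in Ioi 0, s ^ (a - 1) * exp (-s ^ α) = Gamma (a / α) / α := by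
    rw [integral_rpow_mul_exp_neg_rpow hα (by linarith), sub_add_cancel, one_div_mul_eq_div]
  have hnonneg : 0 ≤ᵐ[volume.restrict (Ioi 0)] fun s : ℝ ↦ s ^ (a - 1) * exp (-s ^ α) :=
    (ae_restrict_iff' measurableSet_Ioi).mpr <| .of_forall fun s (hs : 0 < s) ↦ by positivity
  rw [← hval, ofReal_integral_eq_lintegral_ofReal_of_ne_zero hnonneg
    (hval ▸ (div_pos (Gamma_pos_of_pos (div_pos ha hα)) hα).ne')]

lemma Gamma_div_div_mul_Gamma {α a : ℝ} (hα : 0 < α) (ha : 0 < a) :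
    Gamma (a / α) / (α * Gamma a) = Gamma (a / α + 1) / Gamma (a + 1) := by
  rw [Gamma_add_one (div_pos ha hα).ne', Gamma_add_one ha.ne']
  have := (Gamma_pos_of_pos ha).ne'
  field_simp

section NegativeMoments

variable {Ω : Type*} [MeasurableSpace Ω] {μ : Measure Ω} {T : Ω → ℝ}

theorem ofReal_Gamma_mul_lintegral_rpow_neg [SFinite μ] (hT : Measurable T)
    (hpos : ∀ᵐ ω ∂μ, 0 < T ω) {a : ℝ} (ha : 0 < a) :
    ENNReal.ofReal (Gamma a) * ∫⁻ ω, ENNReal.ofReal (T ω ^ (-a)) ∂μ =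
      ∫⁻ s in Ioi 0, ENNReal.ofReal (s ^ (a - 1)) * (∫⁻ ω, ENNReal.ofReal (exp (-s * T ω)) ∂μ) := by
  have hkernel :
      Measurable fun p : Ω × ℝ ↦ ENNReal.ofReal (p.2 ^ (a - 1) * exp (-p.2 * T p.1)) := by
    fun_prop
  calc ENNReal.ofReal (Gamma a) * ∫⁻ ω, ENNReal.ofReal (T ω ^ (-a)) ∂μ
      = ∫⁻ ω, (∫⁻ s in Ioi 0, ENNReal.ofReal (s ^ (a - 1) * exp (-s * T ω))) ∂μ := by
        rw [← lintegral_const_mul' _ _ ENNReal.ofReal_ne_top]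
        refine lintegral_congr_ae ?_
        filter_upwards [hpos] with ω hω
        rw [lintegral_rpow_mul_exp_neg_mul_Ioi ha hω,
          ENNReal.ofReal_mul (Gamma_pos_of_pos ha).le]
    _ = ∫⁻ s in Ioi 0, ∫⁻ ω, ENNReal.ofReal (s ^ (a - 1) * exp (-s * T ω)) ∂μ :=
        lintegral_lintegral_swap hkernel.aemeasurable
    _ = _ := by
        refine setLIntegral_congr_fun measurableSet_Ioi fun s (hs : 0 < s) ↦ ?_
        simp_rw [ENNReal.ofReal_mul (rpow_nonneg hs.le _)]
        exact lintegral_const_mul' _ _ ENNReal.ofReal_ne_top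

theorem lintegral_rpow_neg_of_laplace_eq_exp_neg_rpow [SFinite μ] (hT : Measurable T)
    (hpos : ∀ᵐ ω ∂μ, 0 < T ω) {α : ℝ} (hα : 0 < α)
    (hlap : ∀ s : ℝ, 0 ≤ s → ∫ ω, exp (-s * T ω) ∂μ = exp (-(s ^ α))) {a : ℝ} (ha : 0 < a) :
    ∫⁻ ω, ENNReal.ofReal (T ω ^ (-a)) ∂μ = ENNReal.ofReal (Gamma (a / α) / (α * Gamma a)) := by
  have hlaplace : ∀ s : ℝ, 0 < s →
      ∫⁻ ω, ENNReal.ofReal (exp (-s * T ω)) ∂μ = ENNReal.ofReal (exp (-(s ^ α))) := fun s hs ↦ by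
    rw [← hlap s hs.le, ofReal_integral_eq_lintegral_ofReal_of_ne_zero
      (.of_forall fun _ ↦ (exp_pos _).le) (by rw [hlap s hs.le]; exact (exp_pos _).ne')]
  have hGamma : 0 < Gamma a := Gamma_pos_of_pos ha
  have hmoment : ENNReal.ofReal (Gamma a) * ∫⁻ ω, ENNReal.ofReal (T ω ^ (-a)) ∂μ =
      ENNReal.ofReal (Gamma (a / α) / α) := by
    rw [ofReal_Gamma_mul_lintegral_rpow_neg hT hpos ha, ← lintegral_rpow_mul_exp_neg_rpow_Ioi hα ha]
    refine setLIntegral_congr_fun measurableSet_Ioi fun s (hs : 0 < s) ↦ ?_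
    rw [hlaplace s hs, ENNReal.ofReal_mul (rpow_nonneg hs.le _)]
  rw [ENNReal.eq_div_iff (by positivity) ENNReal.ofReal_ne_top |>.mpr hmoment,
    ← ENNReal.ofReal_div_of_pos hGamma, div_div]

theorem integral_rpow_neg_of_laplace_eq_exp_neg_rpow [SFinite μ] (hT : Measurable T)
    (hpos : ∀ᵐ ω ∂μ, 0 < T ω) {α : ℝ} (hα : 0 < α)
    (hlap : ∀ s : ℝ, 0 ≤ s → ∫ ω, exp (-s * T ω) ∂μ = exp (-(s ^ α))) {a : ℝ} (ha : 0 < a) :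
    ∫ ω, T ω ^ (-a) ∂μ = Gamma (a / α) / (α * Gamma a) := by
  have hnonneg : 0 ≤ᵐ[μ] fun ω ↦ T ω ^ (-a) := by
    filter_upwards [hpos] with ω hω using (rpow_pos_of_pos hω _).le
  rw [integral_eq_lintegral_of_nonneg_ae hnonneg (hT.pow_const _).aestronglyMeasurable,
    lintegral_rpow_neg_of_laplace_eq_exp_neg_rpow hT hpos hα hlap ha, ENNReal.toReal_ofReal]
  have := Gamma_pos_of_pos ha
  have := Gamma_pos_of_pos (div_pos ha hα)
  positivity

end NegativeMoments

theorem stmt_7 {Ω : Type*} [MeasureSpace Ω] (hP : IsProbabilityMeasure (volume : Measure Ω))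
    (T : Ω → ℝ) (hTmeas : Measurable T) (hTpos : ∀ᵐ ω ∂(volume : Measure Ω), 0 < T ω)
    (hlap : ∀ lam : ℝ, 0 ≤ lam →
      (∫ ω, Real.exp (-lam * T ω)) = Real.exp (-(lam ^ (2 / 3 : ℝ))))
    (n : ℕ) (hn : 1 ≤ n) :
    (∫ ω, (T ω) ^ (-(n : ℝ) / 2)) =
      Real.Gamma (3 * n / 4 + 1) / Real.Gamma (n / 2 + 1) := by
  have ha : (0 : ℝ) < n / 2 := div_pos (Nat.cast_pos.mpr hn) two_pos
  rw [neg_div, integral_rpow_neg_of_laplace_eq_exp_neg_rpow hTmeas hTpos (by norm_num) hlap ha,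
    Gamma_div_div_mul_Gamma (by norm_num) ha]
  ring_nf
end

section
/- Let F be the analytic function near 0 satisfying F(0) = 0 and F(λ) = λ·√(3/(3 + F(λ))). Then for every n ≥ 1, the n-th Taylor coefficient of F at 0 is [z^n]F(z) = ((−1)^{n−1}·3^{1−n}/n!)·Γ(3n/2 − 1)/Γ(n/2). -/
open Complex Filter Topology

/-!
Squaring the defining equation gives the cubic `F² (3 + F) = 3 z²`. Differentiating it twice and
eliminating `F'` yields, off `z = 0` and hence everywhere by analyticity, the linear ODE
`12 F'' + 4 (1 + F) = 9 θ²F` for the Euler operator `θ = z d/dz`. As `θ` multiplies the `n`-th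
Taylor coefficient by `n`, the coefficients obey
`12 (n + 3) (n + 2) a (n + 3) = (9 (n + 1)² - 4) a (n + 1)`. The Gamma expression satisfies the
same recurrence by `Γ (s + 1) = s Γ s`, and both sequences start with `a 1 = 1` (the principal
branch of the square root forces `F' 0 = 1`) and `a 2 = -1/6`.
-/

section EulerOperator

variable {𝕜 : Type*} [NontriviallyNormedField 𝕜]

noncomputable def eulerOp (f : 𝕜 → 𝕜) (z : 𝕜) : 𝕜 := z * deriv f z

lemma AnalyticAt.eulerOp [CompleteSpace 𝕜] {f : 𝕜 → 𝕜} {x : 𝕜} (hf : AnalyticAt 𝕜 f x) :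
    AnalyticAt 𝕜 (eulerOp f) x :=
  analyticAt_id.mul hf.deriv

lemma iteratedDeriv_eulerOp_zero {f : 𝕜 → 𝕜} {n : ℕ} (hf : ContDiffAt 𝕜 n (deriv f) 0) :
    iteratedDeriv n (eulerOp f) 0 = n * iteratedDeriv n f 0 := by
  have leibniz := iteratedDeriv_fun_mul (contDiffAt_id (𝕜 := 𝕜) (x := 0)) hf
  simp only [id] at leibniz
  unfold eulerOp
  rw [leibniz]
  rcases n with _ | n
  · simp
  · rw [Finset.sum_eq_single 1]
    · simp [iteratedDeriv_succ']
    · intro i _ hi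
      simp [iteratedDeriv_id, hi]
    · simp

end EulerOperator

lemma Filter.EventuallyEq.eventually_hasDerivAt_unique {𝕜 E : Type*} [NontriviallyNormedField 𝕜]
    [NormedAddCommGroup E] [NormedSpace 𝕜 E] {f g f' g' : 𝕜 → E} {x : 𝕜}
    (h : f =ᶠ[𝓝 x] g) (hf : ∀ᶠ y in 𝓝 x, HasDerivAt f (f' y) y)
    (hg : ∀ᶠ y in 𝓝 x, HasDerivAt g (g' y) y) : ∀ᶠ y in 𝓝 x, f' y = g' y := by
  filter_upwards [h.eventuallyEq_nhds, hf, hg] with y hfg hfy hgy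
  exact (hfy.congr_of_eventuallyEq hfg.symm).unique hgy

lemma eq_of_two_step_recurrence {R : Type*} [Mul R] {a b r : ℕ → R}
    (ha : ∀ n, a (n + 3) = r n * a (n + 1)) (hb : ∀ n, b (n + 3) = r n * b (n + 1))
    (h1 : a 1 = b 1) (h2 : a 2 = b 2) (n : ℕ) : a (n + 1) = b (n + 1) := by
  induction n using Nat.twoStepInduction with
  | zero => exact h1
  | one => exact h2
  | more n ih _ => rw [ha, hb, ih]

lemma ode_of_cubic_relations {K : Type*} [Field K] [CharZero K] {z w w₁ w₂ : K}
    (h₀ : w ^ 2 * (3 + w) = 3 * z ^ 2) (h₁ : 3 * w * w₁ * (2 + w) = 6 * z)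
    (h₂ : 3 * w₂ * w * (2 + w) + 6 * (1 + w) * w₁ ^ 2 = 6) (hw : w * (2 + w) ≠ 0) :
    12 * w₂ + 4 * (1 + w) = 9 * (z * (w₁ + z * w₂)) := by
  have key : (w * (2 + w)) ^ 3 * (12 * w₂ + 4 * (1 + w) - 9 * (z * (w₁ + z * w₂))) = 0 := by
    linear_combination
      (4 * w ^ 4 + 16 * w ^ 3 + 24 * w ^ 2 + 32 * w + 32 - 24 * z ^ 2 * w - 24 * z ^ 2) * h₀
      + (-3 * z * (w * (2 + w)) ^ 2
          - (2 / 3) * (1 + w) * (4 - 3 * z ^ 2) * (3 * w * w₁ * (2 + w) + 6 * z)) * h₁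
      + ((4 - 3 * z ^ 2) * (w * (2 + w)) ^ 2) * h₂
  exact sub_eq_zero.mp ((mul_eq_zero.mp key).resolve_left (pow_ne_zero 3 hw))

lemma eventually_norm_lt_one {X E : Type*} [TopologicalSpace X] [SeminormedAddGroup E]
    {f : X → E} {x : X} (hf : ContinuousAt f x) (hfx : f x = 0) :
    ∀ᶠ y in 𝓝 x, ‖f y‖ < 1 :=
  hf.norm.eventually_lt continuousAt_const (by simp [hfx])

lemma add_ne_zero_of_norm_lt_one {E : Type*} [SeminormedAddGroup E] {w c : E} (hw : ‖w‖ < 1)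
    (hc : 1 ≤ ‖c‖) : c + w ≠ 0 := by
  intro h
  rw [eq_neg_of_add_eq_zero_right h, norm_neg] at hw
  linarith

lemma eventually_sq_mul_three_add {F : ℂ → ℂ} (hF : ContinuousAt F 0) (hF0 : F 0 = 0)
    (heq : ∀ᶠ z in 𝓝 0, F z = z * (3 / (3 + F z)) ^ ((1 : ℂ) / 2)) :
    ∀ᶠ z in 𝓝 0, F z ^ 2 * (3 + F z) = 3 * z ^ 2 := by
  filter_upwards [heq, eventually_norm_lt_one hF hF0] with z hz hlt
  have h3 : 3 + F z ≠ 0 := add_ne_zero_of_norm_lt_one hlt (by norm_num)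
  have hsq : F z ^ 2 = z ^ 2 * (3 / (3 + F z)) := by
    conv_lhs => rw [hz]
    rw [mul_pow, one_div, cpow_ofNat_inv_pow]
  field_simp at hsq
  linear_combination hsq

lemma eventually_hasDerivAt_deriv {𝕜 : Type*} [NontriviallyNormedField 𝕜] [CompleteSpace 𝕜]
    {F : 𝕜 → 𝕜} {x : 𝕜} (hF : AnalyticAt 𝕜 F x) :
    ∀ᶠ z in 𝓝 x, HasDerivAt F (deriv F z) z ∧ HasDerivAt (deriv F) (deriv (deriv F) z) z := by
  filter_upwards [hF.eventually_analyticAt] with z hz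
  exact ⟨hz.differentiableAt.hasDerivAt, hz.deriv.differentiableAt.hasDerivAt⟩

lemma eventually_cubic_deriv {F : ℂ → ℂ} (hF : AnalyticAt ℂ F 0)
    (hcubic : ∀ᶠ z in 𝓝 0, F z ^ 2 * (3 + F z) = 3 * z ^ 2) :
    ∀ᶠ z in 𝓝 0, 3 * F z * deriv F z * (2 + F z) = 6 * z := by
  refine Filter.EventuallyEq.eventually_hasDerivAt_unique
    (f := fun z => F z ^ 2 * (3 + F z)) hcubic ?_ (.of_forall fun z => ?_)
  · filter_upwards [eventually_hasDerivAt_deriv hF] with z hz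
    exact ((hz.1.fun_pow 2).fun_mul (hz.1.const_add 3)).congr_deriv (by ring)
  · exact ((hasDerivAt_pow 2 z).const_mul 3).congr_deriv (by norm_num; ring)

lemma eventually_cubic_deriv_deriv {F : ℂ → ℂ} (hF : AnalyticAt ℂ F 0)
    (hcubic : ∀ᶠ z in 𝓝 0, F z ^ 2 * (3 + F z) = 3 * z ^ 2) :
    ∀ᶠ z in 𝓝 0,
      3 * deriv (deriv F) z * F z * (2 + F z) + 6 * (1 + F z) * deriv F z ^ 2 = 6 := by
  refine Filter.EventuallyEq.eventually_hasDerivAt_unique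
    (f := fun z => 3 * F z * deriv F z * (2 + F z)) (eventually_cubic_deriv hF hcubic) ?_
    (.of_forall fun z => ?_)
  · filter_upwards [eventually_hasDerivAt_deriv hF] with z hz
    obtain ⟨hF', hF''⟩ := hz
    exact (((hF'.const_mul 3).fun_mul hF'').fun_mul (hF'.const_add 2)).congr_deriv (by ring)
  · exact ((hasDerivAt_id z).const_mul 6).congr_deriv (by simp)

lemma eventually_ode {F : ℂ → ℂ} (hF : AnalyticAt ℂ F 0) (hF0 : F 0 = 0)
    (hcubic : ∀ᶠ z in 𝓝 0, F z ^ 2 * (3 + F z) = 3 * z ^ 2) :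
    ∀ᶠ z in 𝓝 0, 12 * deriv (deriv F) z + 4 * (1 + F z) = 9 * eulerOp (eulerOp F) z := by
  have hres : AnalyticAt ℂ
      (fun z => 12 * deriv (deriv F) z + 4 * (1 + F z) - 9 * eulerOp (eulerOp F) z) 0 := by
    have hθθF := hF.eulerOp.eulerOp
    have hF'' := hF.deriv.deriv
    fun_prop
  -- The relations only force the ODE where `F (2 + F) ≠ 0`, i.e. off `z = 0`.
  suffices ∀ᶠ z in 𝓝[≠] 0,
      12 * deriv (deriv F) z + 4 * (1 + F z) - 9 * eulerOp (eulerOp F) z = 0 by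
    filter_upwards [hres.frequently_zero_iff_eventually_zero.mp this.frequently] with z hz
    exact sub_eq_zero.mp hz
  filter_upwards [nhdsWithin_le_nhds (eventually_cubic_deriv_deriv hF hcubic),
    nhdsWithin_le_nhds (eventually_cubic_deriv hF hcubic), nhdsWithin_le_nhds hcubic,
    nhdsWithin_le_nhds (eventually_hasDerivAt_deriv hF),
    nhdsWithin_le_nhds (eventually_norm_lt_one hF.continuousAt hF0),
    self_mem_nhdsWithin] with z h₂ h₁ h₀ hderiv hlt hz
  have hFz : F z ≠ 0 := by
    rintro hFz
    rw [hFz] at h₀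
    exact hz (by simpa using h₀.symm)
  have hθ : eulerOp (eulerOp F) z = z * (deriv F z + z * deriv (deriv F) z) := by
    unfold eulerOp
    rw [((hasDerivAt_id' z).fun_mul hderiv.2).deriv]
    simp
  have h2F : 2 + F z ≠ 0 := add_ne_zero_of_norm_lt_one hlt (by norm_num)
  rw [hθ, ode_of_cubic_relations h₀ h₁ h₂ (mul_ne_zero hFz h2F)]
  ring

lemma taylorCoeff_recurrence {F : ℂ → ℂ} (hF : AnalyticAt ℂ F 0)
    (hode : ∀ᶠ z in 𝓝 0, 12 * deriv (deriv F) z + 4 * (1 + F z) = 9 * eulerOp (eulerOp F) z)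
    (n : ℕ) :
    iteratedDeriv (n + 3) F 0 / (n + 3).factorial =
      (9 * (n + 1) ^ 2 - 4) / (12 * (n + 3) * (n + 2)) *
        (iteratedDeriv (n + 1) F 0 / (n + 1).factorial) := by
  have h := Filter.EventuallyEq.iteratedDeriv_eq (n + 1) hode
  rw [iteratedDeriv_fun_add (f := fun z => 12 * deriv (deriv F) z) (g := fun z => 4 * (1 + F z))
      (analyticAt_const.mul hF.deriv.deriv).contDiffAt
      (analyticAt_const.mul (analyticAt_const.add hF)).contDiffAt,
    iteratedDeriv_const_mul_field, iteratedDeriv_const_mul_field,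
    iteratedDeriv_const_add n.succ_pos, iteratedDeriv_const_mul_field,
    iteratedDeriv_eulerOp_zero hF.eulerOp.deriv.contDiffAt,
    iteratedDeriv_eulerOp_zero hF.deriv.contDiffAt,
    ← iteratedDeriv_succ', ← iteratedDeriv_succ'] at h
  have hfac₃ : ((n + 3).factorial : ℂ) = (n + 3) * (n + 2) * (n + 1).factorial := by
    rw [Nat.factorial_succ, Nat.factorial_succ]
    push_cast
    ring
  have hfac : ((n + 1).factorial : ℂ) ≠ 0 := by exact_mod_cast (n + 1).factorial_ne_zero
  have h₂ : (n : ℂ) + 2 ≠ 0 := by norm_cast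
  have h₃ : (n : ℂ) + 3 ≠ 0 := by norm_cast
  rw [hfac₃]
  push_cast at h
  field_simp
  linear_combination h

lemma deriv_zero_eq_one {F : ℂ → ℂ} (hF : DifferentiableAt ℂ F 0) (hF0 : F 0 = 0)
    (heq : ∀ᶠ z in 𝓝 0, F z = z * (3 / (3 + F z)) ^ ((1 : ℂ) / 2)) :
    deriv F 0 = 1 := by
  have hψ : DifferentiableAt ℂ (fun z => (3 / (3 + F z)) ^ ((1 : ℂ) / 2)) 0 :=
    ((differentiableAt_const _).div ((differentiableAt_const _).add hF) (by simp [hF0])).cpow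
      (differentiableAt_const _) (by simp [hF0])
  rw [Filter.EventuallyEq.deriv_eq heq, ((hasDerivAt_id' 0).fun_mul hψ.hasDerivAt).deriv]
  simp [hF0]

lemma deriv_deriv_zero {F : ℂ → ℂ} (hF0 : F 0 = 0)
    (hode : ∀ᶠ z in 𝓝 0, 12 * deriv (deriv F) z + 4 * (1 + F z) = 9 * eulerOp (eulerOp F) z) :
    deriv (deriv F) 0 = -1 / 3 := by
  have h := hode.self_of_nhds
  simp only [eulerOp, zero_mul, hF0, add_zero, mul_one, mul_zero] at h
  linear_combination h / 12

noncomputable def closedFormCoeff (n : ℕ) : ℝ :=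
  ((-1 : ℝ) ^ (n - 1) * 3 ^ ((1 : ℝ) - n) / n.factorial) *
    (Real.Gamma (3 * n / 2 - 1) / Real.Gamma (n / 2))

lemma closedFormCoeff_one : closedFormCoeff 1 = 1 := by
  have hΓ : Real.Gamma (1 / 2) ≠ 0 := (Real.Gamma_pos_of_pos (by norm_num)).ne'
  norm_num [closedFormCoeff, hΓ]

lemma closedFormCoeff_two : closedFormCoeff 2 = -1 / 6 := by
  norm_num [closedFormCoeff, Real.rpow_neg_one]

lemma closedFormCoeff_add_three (n : ℕ) :
    closedFormCoeff (n + 3) =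
      (9 * (n + 1) ^ 2 - 4) / (12 * (n + 3) * (n + 2)) * closedFormCoeff (n + 1) := by
  set s : ℝ := 3 * (n + 1) / 2 - 1 with hs
  have hs_pos : 0 < s := by rw [hs]; linarith [(n.cast_nonneg : (0 : ℝ) ≤ n)]
  have hΓs : Real.Gamma (s + 3) = (s + 2) * (s + 1) * s * Real.Gamma s := by
    rw [show s + 3 = s + 2 + 1 by ring, Real.Gamma_add_one (by linarith),
      show s + 2 = s + 1 + 1 by ring, Real.Gamma_add_one (by linarith),
      Real.Gamma_add_one hs_pos.ne']
    ring
  have hΓhalf : Real.Gamma ((n + 1) / 2 + 1) = (n + 1) / 2 * Real.Gamma ((n + 1) / 2) :=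
    Real.Gamma_add_one (by positivity)
  have hΓhalf_ne : Real.Gamma ((n + 1) / 2) ≠ 0 := (Real.Gamma_pos_of_pos (by positivity)).ne'
  have hpow : (3 : ℝ) ^ ((1 : ℝ) - (n + 3 : ℕ)) = (3 : ℝ) ^ ((1 : ℝ) - (n + 1 : ℕ)) / 9 := by
    rw [show (1 : ℝ) - (n + 3 : ℕ) = 1 - (n + 1 : ℕ) - 2 by push_cast; ring,
      Real.rpow_sub (by norm_num), Real.rpow_two]
    norm_num
  have hfac : ((n + 3).factorial : ℝ) = (n + 3) * (n + 2) * (n + 1).factorial := by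
    rw [Nat.factorial_succ, Nat.factorial_succ]
    push_cast
    ring
  unfold closedFormCoeff
  rw [hfac, hpow, show (3 : ℝ) * (n + 3 : ℕ) / 2 - 1 = s + 3 by push_cast; ring,
    show ((n + 3 : ℕ) : ℝ) / 2 = (n + 1) / 2 + 1 by push_cast; ring, hΓs, hΓhalf,
    show (3 : ℝ) * (n + 1 : ℕ) / 2 - 1 = s by push_cast; ring,
    show n + 3 - 1 = n + 1 - 1 + 2 by omega, pow_add]
  push_cast
  field_simp
  ring

theorem stmt_9 (F : ℂ → ℂ) (hF : AnalyticAt ℂ F 0) (hF0 : F 0 = 0)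
    (heq : ∀ᶠ z in nhds (0 : ℂ), F z = z * (3 / (3 + F z)) ^ ((1 : ℂ) / 2))
    (n : ℕ) (hn : 1 ≤ n) :
    iteratedDeriv n F 0 / (n.factorial : ℂ) =
      ((((-1 : ℝ) ^ (n - 1) * 3 ^ ((1 : ℝ) - n) / n.factorial) *
        (Real.Gamma (3 * n / 2 - 1) / Real.Gamma (n / 2)) : ℝ) : ℂ) := by
  have hode := eventually_ode hF hF0 (eventually_sq_mul_three_add hF.continuousAt hF0 heq)
  obtain ⟨n, rfl⟩ := Nat.exists_eq_add_of_le' hn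
  refine eq_of_two_step_recurrence (a := fun n => iteratedDeriv n F 0 / (n.factorial : ℂ))
    (b := fun n => (closedFormCoeff n : ℂ)) (taylorCoeff_recurrence hF hode)
    (fun n => by rw [closedFormCoeff_add_three]; push_cast; rfl) ?_ ?_ n
  · simp [deriv_zero_eq_one hF.differentiableAt hF0 heq, closedFormCoeff_one]
  · simp [iteratedDeriv_succ, deriv_deriv_zero hF0 hode, closedFormCoeff_two]
    norm_num
end

section
/- For every integer n ≥ 2, the terminating hypergeometric sum ₂F₁(−n+1, n; −2n−1; 1/2) equals (2^{2n+1}/√π)·Γ(n/2 + 3/2)·Γ(3n/2 + 1)/Γ(2n + 2). -/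
/-!
Both sides satisfy the second-order recurrence
`4(n+1)(2n+3)(2n+5) s(n+2) = 3(3n+2)(3n+4)(n+3) s(n)`.
For the Gamma side this is `Γ(s+1) = s Γ(s)`. For the sum it is Zeilberger's creative telescoping:
after multiplying by `n(n+1)(n+2)(n+3)`, the recurrence applied to the `j`-th term is the difference
`G(n, j+1) - G(n, j)` of a certificate `G`, a polynomial times a hypergeometric term, and the
certificates telescope to `G(n, n+2) - G(n, 0) = 0`. The two sides agree at `n = 2` and `n = 3`.
-/

open Polynomial Finset
open scoped Nat

theorem ascPochhammer_eval_mul_eval_add_comm {R : Type*} [CommSemiring R] (k j : ℕ) (x : R) :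
    (ascPochhammer R k).eval x * (ascPochhammer R j).eval (x + k) =
      (ascPochhammer R j).eval x * (ascPochhammer R k).eval (x + j) := by
  have h := fun a b : ℕ => congrArg (eval x) (ascPochhammer_mul (S := R) a b)
  simp only [eval_mul, eval_comp, eval_add, eval_X, eval_natCast] at h
  rw [h, h, add_comm]

theorem descPochhammer_eval_mul_eval_sub_comm {R : Type*} [CommRing R] (k j : ℕ) (x : R) :
    (descPochhammer R k).eval x * (descPochhammer R j).eval (x - k) =
      (descPochhammer R j).eval x * (descPochhammer R k).eval (x - j) := by
  have h := fun a b : ℕ => congrArg (eval x) (descPochhammer_mul (R := R) a b)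
  simp only [eval_mul, eval_comp, eval_sub, eval_X, eval_natCast] at h
  rw [h, h, add_comm]

theorem eq_of_two_step_recurrence_s13 {M : Type*} [MonoidWithZero M] [IsLeftCancelMulZero M]
    {a b u v : ℕ → M} {m : ℕ}
    (ha : ∀ n, m ≤ n → a n ≠ 0) (hu : ∀ n, m ≤ n → a n * u (n + 2) = b n * u n)
    (hv : ∀ n, m ≤ n → a n * v (n + 2) = b n * v n) (h₀ : u m = v m)
    (h₁ : u (m + 1) = v (m + 1))
    {n : ℕ} (hn : m ≤ n) : u n = v n := by
  obtain ⟨k, rfl⟩ := Nat.exists_eq_add_of_le hn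
  induction k using Nat.twoStepInduction with
  | zero => exact h₀
  | one => exact h₁
  | more k ih _ =>
    have hk : m ≤ m + k := Nat.le_add_right m k
    rw [← add_assoc]
    exact mul_left_cancel₀ (ha _ hk) <| by rw [hu _ hk, hv _ hk, ih hk]

noncomputable section

namespace TerminatingHypergeometric

def summand (x : ℝ) (j : ℕ) : ℝ :=
  (ascPochhammer ℝ j).eval (-x + 1) * (ascPochhammer ℝ j).eval x /
    (ascPochhammer ℝ j).eval (-2 * x - 1) * (1 / 2 : ℝ) ^ j / (j ! : ℝ)

/-- Unlike `summand n j`, which vanishes from `j = n` on, `hyperTerm n j` vanishes only from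
`j = n + 2` on, which is where the telescoping certificates stop. -/
def hyperTerm (x : ℝ) (j : ℕ) : ℝ :=
  (ascPochhammer ℝ j).eval x * (descPochhammer ℝ j).eval (x + 1) /
    ((descPochhammer ℝ j).eval (2 * x + 1) * 2 ^ j * j !)

theorem mul_summand_eq_mul_hyperTerm (x : ℝ) (j : ℕ) :
    x * (x + 1) * summand x j = (x + 1 - j) * (x - j) * hyperTerm x j := by
  have shift := descPochhammer_eval_mul_eval_sub_comm 2 j (x + 1)
  rw [show x + 1 - ((2 : ℕ) : ℝ) = x - 1 by push_cast; ring] at shift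
  simp only [descPochhammer_succ_eval, descPochhammer_zero, eval_one, Nat.cast_zero,
    Nat.cast_one, sub_zero, one_mul] at shift
  have hsign : ((-1 : ℝ) ^ j) ≠ 0 := pow_ne_zero _ (by norm_num)
  rw [summand, hyperTerm, show -x + 1 = -(x - 1) by ring, show -2 * x - 1 = -(2 * x + 1) by ring,
    ascPochhammer_eval_neg_eq_descPochhammer, ascPochhammer_eval_neg_eq_descPochhammer,
    mul_assoc ((-1 : ℝ) ^ j), mul_div_mul_left _ _ hsign]
  simp only [div_eq_mul_inv, mul_inv, inv_pow, one_mul]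
  linear_combination (ascPochhammer ℝ j).eval x * ((descPochhammer ℝ j).eval (2 * x + 1))⁻¹ *
    (2 ^ j)⁻¹ * ((j ! : ℝ))⁻¹ * shift

theorem hyperTerm_succ (x : ℝ) (j : ℕ) (hj : 2 * x + 1 - j ≠ 0) :
    2 * (j + 1) * (2 * x + 1 - j) * hyperTerm x (j + 1) =
      (x + j) * (x + 1 - j) * hyperTerm x j := by
  rw [hyperTerm, hyperTerm, ascPochhammer_succ_eval, descPochhammer_succ_eval,
    descPochhammer_succ_eval, pow_succ, Nat.factorial_succ]
  push_cast
  field_simp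

theorem hyperTerm_add_two (x : ℝ) (j : ℕ) (hj : (j : ℝ) < 2 * x + 2) :
    x * (x + 1) * ((2 * x + 2) * (2 * x + 3) * (2 * x + 4) * (2 * x + 5)) *
        ((x + 3 - j) * (x + 2 - j) * hyperTerm (x + 2) j) =
      (x + 2) * (x + 3) * ((x + j) * (x + j + 1)) *
        ((2 * x + 2 - j) * (2 * x + 3 - j) * (2 * x + 4 - j) * (2 * x + 5 - j)) *
          hyperTerm x j := by
  have asc := ascPochhammer_eval_mul_eval_add_comm 2 j x
  have desc := descPochhammer_eval_mul_eval_sub_comm 2 j (x + 3)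
  have desc₂ := descPochhammer_eval_mul_eval_sub_comm 4 j (2 * x + 5)
  rw [show x + 3 - ((2 : ℕ) : ℝ) = x + 1 by push_cast; ring] at desc
  rw [show 2 * x + 5 - ((4 : ℕ) : ℝ) = 2 * x + 1 by push_cast; ring] at desc₂
  simp only [ascPochhammer_succ_eval, descPochhammer_succ_eval, ascPochhammer_zero,
    descPochhammer_zero, eval_one, Nat.cast_ofNat, Nat.cast_zero, Nat.cast_one, add_zero,
    sub_zero, one_mul] at asc desc desc₂
  have hC : (descPochhammer ℝ j).eval (2 * x + 1) ≠ 0 :=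
    (descPochhammer_pos (by linarith)).ne'
  have hC' : (descPochhammer ℝ j).eval (2 * x + 5) ≠ 0 :=
    (descPochhammer_pos (by linarith)).ne'
  rw [hyperTerm, hyperTerm, show 2 * (x + 2) + 1 = 2 * x + 5 by ring,
    show x + 2 + 1 = x + 3 by ring]
  generalize (ascPochhammer ℝ j).eval x = A at *
  generalize (ascPochhammer ℝ j).eval (x + 2) = A' at *
  generalize (descPochhammer ℝ j).eval (x + 1) = B at *
  generalize (descPochhammer ℝ j).eval (x + 3) = B' at *
  generalize (descPochhammer ℝ j).eval (2 * x + 1) = C at *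
  generalize (descPochhammer ℝ j).eval (2 * x + 5) = C' at *
  field_simp
  -- the goal is the product of `asc`, `desc` and `desc₂`
  linear_combination
    (B' * ((x + 3 - j) * (x + 2 - j)) *
      ((2 * x + 2) * (2 * x + 3) * (2 * x + 4) * (2 * x + 5) * C)) * asc
    - (A * ((x + j) * (x + j + 1)) *
      ((2 * x + 2) * (2 * x + 3) * (2 * x + 4) * (2 * x + 5) * C)) * desc
    + (A * ((x + j) * (x + j + 1)) * ((x + 3) * (x + 2) * B)) * desc₂

def recA (x : ℝ) : ℝ := 4 * (x + 1) * (2 * x + 3) * (2 * x + 5)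

def recB (x : ℝ) : ℝ := 3 * (3 * x + 2) * (3 * x + 4) * (x + 3)

theorem recA_pos (n : ℕ) : 0 < recA n := by
  unfold recA
  positivity

/-- Found by Zeilberger's algorithm. -/
def certPoly (x j : ℝ) : ℝ :=
  (x + 3) * (-2 * j ^ 6 + 16 * j ^ 5 - 70 * j ^ 4 + 32 * j ^ 3 + 264 * j ^ 2 - 288 * j
    + x * (8 * j ^ 5 - 56 * j ^ 4 - 24 * j ^ 3 + 904 * j ^ 2 - 1200 * j)
    + x ^ 2 * (-8 * j ^ 4 - 60 * j ^ 3 + 996 * j ^ 2 - 1816 * j)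
    + x ^ 3 * (-20 * j ^ 3 + 430 * j ^ 2 - 1252 * j)
    + x ^ 4 * (62 * j ^ 2 - 392 * j)
    + x ^ 5 * (-44 * j))

def certificate (x : ℝ) (j : ℕ) : ℝ := certPoly x j * hyperTerm x j

theorem certificate_zero (x : ℝ) : certificate x 0 = 0 := by
  simp [certificate, certPoly]

theorem creative_telescoping (x : ℝ) (j : ℕ) (hj : (j : ℝ) < 2 * x + 1) :
    x * (x + 1) * (x + 2) * (x + 3) * (recA x * summand (x + 2) j - recB x * summand x j) =
      certificate x (j + 1) - certificate x j := by
  have hx : 0 < 2 * x + 1 := lt_of_le_of_lt (Nat.cast_nonneg j) hj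
  have hD : (2 * x + 2) * (2 * x + 3) * (2 * x + 4) * (2 * x + 5) ≠ 0 := by
    apply ne_of_gt
    apply_rules [mul_pos] <;> linarith
  have hE : 2 * (j + 1) * (2 * x + 1 - j) ≠ 0 := by
    have : 0 < 2 * x + 1 - j := sub_pos.mpr hj
    positivity
  have e₀ := mul_summand_eq_mul_hyperTerm x j
  have e₂ := mul_summand_eq_mul_hyperTerm (x + 2) j
  have e₃ := hyperTerm_add_two x j (by linarith)
  have e₄ := hyperTerm_succ x j (sub_pos.mpr hj).ne'
  apply mul_left_cancel₀ (mul_ne_zero hD hE)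
  rw [certificate, certificate, Nat.cast_succ]
  linear_combination (norm := skip)
    ((2 * x + 2) * (2 * x + 3) * (2 * x + 4) * (2 * x + 5) * (2 * (j + 1) * (2 * x + 1 - j))
      * recA x * x * (x + 1)) * e₂
    + (2 * (j + 1) * (2 * x + 1 - j) * recA x) * e₃
    - ((2 * x + 2) * (2 * x + 3) * (2 * x + 4) * (2 * x + 5) * (2 * (j + 1) * (2 * x + 1 - j))
      * recB x * (x + 2) * (x + 3)) * e₀
    - ((2 * x + 2) * (2 * x + 3) * (2 * x + 4) * (2 * x + 5) * certPoly x (j + 1)) * e₄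
  unfold certPoly recA recB
  ring

theorem summand_natCast_eq_zero {n j : ℕ} (hn : 1 ≤ n) (hj : n ≤ j) : summand n j = 0 := by
  have hvanish : (ascPochhammer ℝ j).eval (-(n : ℝ) + 1) = 0 := by
    rw [show -(n : ℝ) + 1 = -((n - 1 : ℕ) : ℝ) by push_cast [Nat.cast_sub hn]; ring]
    exact ascPochhammer_eval_neg_coe_nat_of_lt (by omega)
  simp [summand, hvanish]

theorem hyperTerm_natCast_add_two (n : ℕ) : hyperTerm n (n + 2) = 0 := by
  have hvanish : (descPochhammer ℝ (n + 2)).eval ((n : ℝ) + 1) = 0 := by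
    exact_mod_cast descPochhammer_eval_coe_nat_of_lt (R := ℝ) (show n + 1 < n + 2 by omega)
  simp [hyperTerm, hvanish]

theorem recA_mul_sum_summand_add_two (n : ℕ) (hn : 1 ≤ n) :
    recA n * ∑ j ∈ range (n + 2), summand ((n + 2 : ℕ) : ℝ) j =
      recB n * ∑ j ∈ range n, summand n j := by
  have hextend : ∑ j ∈ range (n + 2), summand n j = ∑ j ∈ range n, summand n j := by
    rw [sum_range_succ, sum_range_succ, summand_natCast_eq_zero hn le_rfl,
      summand_natCast_eq_zero hn (by omega), add_zero, add_zero]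
  have hj : ∀ j ∈ range (n + 2), (j : ℝ) < 2 * n + 1 := fun j hj => by
    have : (j : ℝ) < n + 2 := by exact_mod_cast mem_range.mp hj
    have : (1 : ℝ) ≤ n := by exact_mod_cast hn
    linarith
  have htelescope :
      (n : ℝ) * (n + 1) * (n + 2) * (n + 3) *
        (recA n * ∑ j ∈ range (n + 2), summand ((n : ℝ) + 2) j -
          recB n * ∑ j ∈ range n, summand n j) = 0 := by
    calc _ = ∑ j ∈ range (n + 2), (certificate n (j + 1) - certificate n j) := by
          rw [← hextend, mul_sum, mul_sum, ← sum_sub_distrib, mul_sum]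
          exact sum_congr rfl fun j hj' => creative_telescoping n j (hj j hj')
      _ = 0 := by
          rw [sum_range_sub (certificate n), certificate, hyperTerm_natCast_add_two, mul_zero,
            certificate_zero, sub_zero]
  have hpos : (0 : ℝ) < n * (n + 1) * (n + 2) * (n + 3) := by
    have : (0 : ℝ) < n := by exact_mod_cast hn
    positivity
  push_cast
  linarith [(mul_eq_zero.mp htelescope).resolve_left hpos.ne']

def closedForm (n : ℕ) : ℝ :=
  2 ^ (2 * n + 1) / Real.sqrt Real.pi *
    (Real.Gamma ((n : ℝ) / 2 + 3 / 2) * Real.Gamma (3 * (n : ℝ) / 2 + 1) /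
      Real.Gamma (2 * (n : ℝ) + 2))

theorem recA_mul_closedForm_add_two (n : ℕ) :
    recA n * closedForm (n + 2) = recB n * closedForm n := by
  have hΓ₁ : Real.Gamma (((n + 2 : ℕ) : ℝ) / 2 + 3 / 2) =
      ((n : ℝ) / 2 + 3 / 2) * Real.Gamma ((n : ℝ) / 2 + 3 / 2) := by
    rw [← Real.Gamma_add_one (by positivity)]
    push_cast
    ring_nf
  have hΓ₂ : Real.Gamma (3 * ((n + 2 : ℕ) : ℝ) / 2 + 1) =
      (3 * (n : ℝ) / 2 + 3) * (3 * (n : ℝ) / 2 + 2) * (3 * (n : ℝ) / 2 + 1) *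
        Real.Gamma (3 * (n : ℝ) / 2 + 1) := by
    rw [show 3 * ((n + 2 : ℕ) : ℝ) / 2 + 1 = 3 * (n : ℝ) / 2 + 1 + 1 + 1 + 1 by
        push_cast; ring,
      Real.Gamma_add_one (by positivity), Real.Gamma_add_one (by positivity),
      Real.Gamma_add_one (by positivity)]
    ring
  have hΓ₃ : Real.Gamma (2 * ((n + 2 : ℕ) : ℝ) + 2) =
      (2 * (n : ℝ) + 5) * (2 * (n : ℝ) + 4) * (2 * (n : ℝ) + 3) * (2 * (n : ℝ) + 2) *
        Real.Gamma (2 * (n : ℝ) + 2) := by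
    rw [show 2 * ((n + 2 : ℕ) : ℝ) + 2 = 2 * (n : ℝ) + 2 + 1 + 1 + 1 + 1 by push_cast; ring,
      Real.Gamma_add_one (by positivity), Real.Gamma_add_one (by positivity),
      Real.Gamma_add_one (by positivity), Real.Gamma_add_one (by positivity)]
    ring
  have hΓ : Real.Gamma (2 * (n : ℝ) + 2) ≠ 0 := (Real.Gamma_pos_of_pos (by positivity)).ne'
  rw [closedForm, closedForm, hΓ₁, hΓ₂, hΓ₃, recA, recB, pow_succ, pow_succ,
    show 2 * (n + 2) = 2 * n + 4 by ring, pow_add]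
  field_simp
  ring

theorem closedForm_two : closedForm 2 = 6 / 5 := by
  have hΓ₁ : Real.Gamma (((2 : ℕ) : ℝ) / 2 + 3 / 2) = 3 / 4 * Real.sqrt Real.pi := by
    rw [show ((2 : ℕ) : ℝ) / 2 + 3 / 2 = 1 / 2 + 1 + 1 by norm_num,
      Real.Gamma_add_one (by norm_num), Real.Gamma_add_one (by norm_num), Real.Gamma_one_half_eq]
    ring
  have hΓ₂ : Real.Gamma (3 * ((2 : ℕ) : ℝ) / 2 + 1) = 3 ! := by
    rw [← Real.Gamma_nat_eq_factorial]
    norm_num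
  have hΓ₃ : Real.Gamma (2 * ((2 : ℕ) : ℝ) + 2) = 5 ! := by
    rw [← Real.Gamma_nat_eq_factorial]
    norm_num
  have hπ : Real.sqrt Real.pi ≠ 0 := (Real.sqrt_pos.mpr Real.pi_pos).ne'
  rw [closedForm, hΓ₁, hΓ₂, hΓ₃]
  field_simp
  norm_num [Nat.factorial]

theorem closedForm_three : closedForm 3 = 3 / 2 := by
  have hΓ₁ : Real.Gamma (((3 : ℕ) : ℝ) / 2 + 3 / 2) = 2 ! := by
    rw [← Real.Gamma_nat_eq_factorial]
    norm_num
  have hΓ₂ : Real.Gamma (3 * ((3 : ℕ) : ℝ) / 2 + 1) = 945 / 32 * Real.sqrt Real.pi := by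
    rw [show 3 * ((3 : ℕ) : ℝ) / 2 + 1 = 1 / 2 + 1 + 1 + 1 + 1 + 1 by norm_num,
      Real.Gamma_add_one (by norm_num), Real.Gamma_add_one (by norm_num),
      Real.Gamma_add_one (by norm_num), Real.Gamma_add_one (by norm_num),
      Real.Gamma_add_one (by norm_num), Real.Gamma_one_half_eq]
    ring
  have hΓ₃ : Real.Gamma (2 * ((3 : ℕ) : ℝ) + 2) = 7 ! := by
    rw [← Real.Gamma_nat_eq_factorial]
    norm_num
  have hπ : Real.sqrt Real.pi ≠ 0 := (Real.sqrt_pos.mpr Real.pi_pos).ne'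
  rw [closedForm, hΓ₁, hΓ₂, hΓ₃]
  field_simp
  norm_num [Nat.factorial]

theorem sum_summand_two : ∑ j ∈ range 2, summand ((2 : ℕ) : ℝ) j = 6 / 5 := by
  norm_num [summand, sum_range_succ, ascPochhammer_succ_eval]

theorem sum_summand_three : ∑ j ∈ range 3, summand ((3 : ℕ) : ℝ) j = 3 / 2 := by
  norm_num [summand, sum_range_succ, ascPochhammer_succ_eval]

end TerminatingHypergeometric

end

open TerminatingHypergeometric

theorem stmt_13 (n : ℕ) (hn : 2 ≤ n) :
    (∑ j ∈ Finset.range n,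
        ((ascPochhammer ℝ j).eval (-(n : ℝ) + 1) * (ascPochhammer ℝ j).eval (n : ℝ) /
            (ascPochhammer ℝ j).eval (-2 * (n : ℝ) - 1)) *
          (1 / 2 : ℝ) ^ j / (j.factorial : ℝ)) =
      2 ^ (2 * n + 1) / Real.sqrt Real.pi *
        (Real.Gamma ((n : ℝ) / 2 + 3 / 2) * Real.Gamma (3 * (n : ℝ) / 2 + 1) /
          Real.Gamma (2 * (n : ℝ) + 2)) :=
  eq_of_two_step_recurrence_s13 (a := fun n => recA n) (b := fun n => recB n)
    (u := fun n => ∑ j ∈ range n, summand n j) (v := closedForm)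
    (fun n _ => (recA_pos n).ne')
    (fun n hn => recA_mul_sum_summand_add_two n (by omega))
    (fun n _ => recA_mul_closedForm_add_two n)
    (sum_summand_two.trans closedForm_two.symm)
    (sum_summand_three.trans closedForm_three.symm) hn
end

section
/- For every β > 0, ∫₀^∞ (2πu⁵)^{−1/2} e^{−1/(2u)} e^{−βu} du = (1 + √(2β))·e^{−√(2β)}. -/
/-!
Substituting `u = 1 / (2 t²)` and writing `β = 2 c²` turns the integral into
`4 e^{-2c} / √π · ∫₀^∞ t² e^{-(t - c/t)²} dt`. The Cauchy–Schlömilch substitution `s = t - c/t`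
gives `∫₀^∞ (t² + c³/t⁴) e^{-(t - c/t)²} dt = ∫ (s² + c) e^{-s²} ds = √π (1/2 + c)`, since
`t² + c³/t⁴ = (1 + c/t²)((t - c/t)² + c)`; the inversion `t ↦ c/t` exchanges the two summands,
so `∫₀^∞ t² e^{-(t - c/t)²} dt = √π (1 + 2c) / 4`.
-/

open MeasureTheory

open Real Set

section ChangeOfVariables

variable {E : Type*} [NormedAddCommGroup E] [NormedSpace ℝ E] {c : ℝ}

lemma hasDerivAt_const_div (c : ℝ) {t : ℝ} (ht : t ≠ 0) :
    HasDerivAt (fun t : ℝ => c / t) (-(c / t ^ 2)) t := by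
  simpa [div_eq_mul_inv] using (hasDerivAt_inv ht).const_mul c

lemma hasDerivAt_sub_div (c : ℝ) {t : ℝ} (ht : t ≠ 0) :
    HasDerivAt (fun t : ℝ => t - c / t) (1 + c / t ^ 2) t :=
  ((hasDerivAt_id' t).sub (hasDerivAt_const_div c ht)).congr_deriv (sub_neg_eq_add _ _)

lemma strictMonoOn_sub_div (hc : 0 < c) : StrictMonoOn (fun t : ℝ => t - c / t) (Ioi 0) :=
  fun _ ha _ _ hab => sub_lt_sub hab (div_lt_div_of_pos_left hc ha hab)

lemma image_sub_div_Ioi (hc : 0 < c) : (fun t : ℝ => t - c / t) '' Ioi 0 = univ := by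
  refine eq_univ_of_forall fun s => ?_
  -- the positive root of `t ^ 2 - s * t - c`
  set r := √(s ^ 2 + 4 * c)
  have hr : r ^ 2 = s ^ 2 + 4 * c := sq_sqrt (by positivity)
  have hpos : 0 < s + r := by nlinarith [sqrt_nonneg (s ^ 2 + 4 * c)]
  refine ⟨(s + r) / 2, mem_Ioi.2 (by positivity), ?_⟩
  field_simp
  linear_combination hr

theorem integral_comp_sub_div_Ioi (hc : 0 < c) (g : ℝ → E) :
    ∫ t in Ioi 0, (1 + c / t ^ 2) • g (t - c / t) = ∫ s, g s := by
  have := integral_image_eq_integral_abs_deriv_smul measurableSet_Ioi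
    (fun t ht => (hasDerivAt_sub_div c (ne_of_gt ht)).hasDerivWithinAt)
    (strictMonoOn_sub_div hc).injOn g
  rw [image_sub_div_Ioi hc, setIntegral_univ] at this
  rw [this]
  refine setIntegral_congr_fun measurableSet_Ioi fun t (ht : 0 < t) => ?_
  rw [abs_of_pos (by positivity)]

theorem integrableOn_comp_sub_div_Ioi_iff (hc : 0 < c) (g : ℝ → E) :
    IntegrableOn (fun t => (1 + c / t ^ 2) • g (t - c / t)) (Ioi 0) ↔ Integrable g := by
  have := integrableOn_image_iff_integrableOn_abs_deriv_smul measurableSet_Ioi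
    (fun t ht => (hasDerivAt_sub_div c (ne_of_gt ht)).hasDerivWithinAt)
    (strictMonoOn_sub_div hc).injOn g
  rw [image_sub_div_Ioi hc, integrableOn_univ] at this
  rw [this]
  refine integrableOn_congr_fun (fun t (ht : 0 < t) => ?_) measurableSet_Ioi
  rw [abs_of_pos (by positivity)]

theorem integral_comp_div_Ioi (hc : 0 < c) (g : ℝ → E) :
    ∫ t in Ioi 0, (c / t ^ 2) • g (c / t) = ∫ t in Ioi 0, g t := by
  have himage : (fun t : ℝ => c / t) '' Ioi 0 = Ioi 0 := by
    refine Subset.antisymm (image_subset_iff.2 fun t ht => div_pos hc ht) fun u hu => ?_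
    exact ⟨c / u, div_pos hc hu, div_div_cancel₀ hc.ne'⟩
  have hinj : InjOn (fun t : ℝ => c / t) (Ioi 0) := fun a _ b _ hab =>
    inv_injective (mul_left_cancel₀ hc.ne' hab)
  have := integral_image_eq_integral_abs_deriv_smul measurableSet_Ioi
    (fun t ht => (hasDerivAt_const_div c (ne_of_gt ht)).hasDerivWithinAt) hinj g
  rw [himage] at this
  rw [this]
  refine setIntegral_congr_fun measurableSet_Ioi fun t (ht : 0 < t) => ?_
  rw [abs_neg, abs_of_pos (by positivity)]

theorem integral_comp_inv_mul_sq_Ioi {a : ℝ} (ha : 0 < a) (g : ℝ → E) :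
    ∫ t in Ioi 0, (2 / (a * t ^ 3)) • g ((a * t ^ 2)⁻¹) = ∫ u in Ioi 0, g u := by
  have himage : (fun t : ℝ => (a * t ^ 2)⁻¹) '' Ioi 0 = Ioi 0 := by
    refine Subset.antisymm (image_subset_iff.2 fun t ht => ?_) fun u (hu : 0 < u) => ?_
    · simp only [mem_preimage, mem_Ioi] at ht ⊢
      positivity
    · refine ⟨√((a * u)⁻¹), mem_Ioi.2 (by positivity), ?_⟩
      beta_reduce
      rw [sq_sqrt (by positivity), mul_inv, inv_inv, inv_mul_cancel_left₀ ha.ne']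
  have hderiv (t : ℝ) (ht : 0 < t) :
      HasDerivWithinAt (fun t : ℝ => (a * t ^ 2)⁻¹) (-(2 / (a * t ^ 3))) (Ioi 0) t := by
    refine (((hasDerivAt_pow 2 t).const_mul a).fun_inv (by positivity)).hasDerivWithinAt
      |>.congr_deriv ?_
    field_simp
    ring
  have hinj : InjOn (fun t : ℝ => (a * t ^ 2)⁻¹) (Ioi 0) := fun s hs t ht hst =>
    (sq_eq_sq₀ (le_of_lt hs) (le_of_lt ht)).1 (mul_left_cancel₀ ha.ne' (inv_injective hst))
  have := integral_image_eq_integral_abs_deriv_smul measurableSet_Ioi hderiv hinj g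
  rw [himage] at this
  rw [this]
  refine setIntegral_congr_fun measurableSet_Ioi fun t (ht : 0 < t) => ?_
  rw [abs_neg, abs_of_pos (by positivity)]

end ChangeOfVariables

lemma integral_sq_mul_exp_neg_sq : ∫ s : ℝ, s ^ 2 * exp (-s ^ 2) = √π / 2 := by
  have hIoi : ∫ s in Ioi (0 : ℝ), s ^ 2 * exp (-s ^ 2) = 1 / 2 * Gamma (3 / 2) := by
    rw [show (3 : ℝ) / 2 = (2 + 1) / 2 by norm_num,
      ← integral_rpow_mul_exp_neg_rpow two_pos (by norm_num)]
    simp_rw [rpow_two]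
  have hGamma : Gamma (3 / 2) = √π / 2 := by
    rw [show (3 : ℝ) / 2 = 1 / 2 + 1 by norm_num, Gamma_add_one (by norm_num), Gamma_one_half_eq]
    ring
  calc ∫ s : ℝ, s ^ 2 * exp (-s ^ 2) = ∫ s : ℝ, |s| ^ 2 * exp (-|s| ^ 2) := by
        simp_rw [sq_abs]
    _ = √π / 2 := by
      rw [integral_comp_abs (f := fun s => s ^ 2 * exp (-s ^ 2)), hIoi, hGamma]
      ring

lemma integrable_sq_mul_exp_neg_sq : Integrable fun s : ℝ => s ^ 2 * exp (-s ^ 2) := by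
  simpa [rpow_two] using integrable_rpow_mul_exp_neg_mul_sq one_pos (s := 2) (by norm_num)

lemma integrable_exp_neg_sq : Integrable fun s : ℝ => exp (-s ^ 2) := by
  simpa using integrable_exp_neg_mul_sq one_pos

lemma integrable_sq_add_mul_exp_neg_sq (c : ℝ) :
    Integrable fun s : ℝ => (s ^ 2 + c) * exp (-s ^ 2) := by
  simpa only [add_mul] using
    integrable_sq_mul_exp_neg_sq.fun_add (integrable_exp_neg_sq.const_mul c)

lemma integral_sq_add_mul_exp_neg_sq (c : ℝ) :
    ∫ s : ℝ, (s ^ 2 + c) * exp (-s ^ 2) = √π / 2 + c * √π := by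
  have hgauss : ∫ s : ℝ, exp (-s ^ 2) = √π := by simpa using integral_gaussian 1
  simp_rw [add_mul]
  rw [integral_add integrable_sq_mul_exp_neg_sq (integrable_exp_neg_sq.const_mul c),
    integral_const_mul, integral_sq_mul_exp_neg_sq, hgauss]

theorem integral_sq_mul_exp_neg_sq_sub_div {c : ℝ} (hc : 0 < c) :
    ∫ t in Ioi 0, t ^ 2 * exp (-(t - c / t) ^ 2) = √π * (1 + 2 * c) / 4 := by
  set K : ℝ → ℝ := fun t => exp (-(t - c / t) ^ 2)
  set g : ℝ → ℝ := fun s => (s ^ 2 + c) * exp (-s ^ 2)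
  set F : ℝ → ℝ := fun t => (t ^ 2 + c ^ 3 / t ^ 4) * K t
  have hF : EqOn F (fun t => (1 + c / t ^ 2) • g (t - c / t)) (Ioi 0) := fun t (ht : 0 < t) => by
    simp only [F, g, K, smul_eq_mul]
    field_simp
    ring
  have hF_int : IntegrableOn F (Ioi 0) :=
    ((integrableOn_comp_sub_div_Ioi_iff hc g).2 (integrable_sq_add_mul_exp_neg_sq c)).congr_fun
      hF.symm measurableSet_Ioi
  have hF_val : ∫ t in Ioi 0, F t = √π / 2 + c * √π := by
    rw [setIntegral_congr_fun measurableSet_Ioi hF, integral_comp_sub_div_Ioi hc,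
      integral_sq_add_mul_exp_neg_sq]
  have hsq_int : IntegrableOn (fun t => t ^ 2 * K t) (Ioi 0) := by
    refine integrable_of_le_of_le (g₁ := 0) (g₂ := F) (by fun_prop) ?_ ?_
      (integrable_zero _ _ _) hF_int
    · exact Filter.Eventually.of_forall fun t => by positivity
    · filter_upwards [ae_restrict_mem measurableSet_Ioi] with t (ht : 0 < t)
      have : 0 ≤ c ^ 3 / t ^ 4 * K t := by positivity
      simp only [F]
      linarith
  have hsymm : ∫ t in Ioi 0, t ^ 2 * K t = ∫ t in Ioi 0, (F t - t ^ 2 * K t) := by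
    rw [← integral_comp_div_Ioi hc]
    refine setIntegral_congr_fun measurableSet_Ioi fun t (ht : 0 < t) => ?_
    have hK : K (c / t) = K t := by
      simp only [K, div_div_cancel₀ hc.ne']
      ring_nf
    simp only [F, smul_eq_mul, hK]
    field_simp
    ring
  rw [integral_sub hF_int hsq_int, hF_val] at hsymm
  linarith

lemma two_mul_pi_mul_inv_two_mul_sq_pow_five_rpow_neg_half {t : ℝ} (ht : 0 < t) :
    (2 * π * ((2 * t ^ 2)⁻¹) ^ 5) ^ (-(1 / 2) : ℝ) = 4 * t ^ 5 / √π := by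
  have hbase : 2 * π * ((2 * t ^ 2)⁻¹) ^ 5 = (√π / (4 * t ^ 5)) ^ 2 := by
    rw [div_pow, sq_sqrt pi_pos.le]
    field_simp
    ring
  rw [hbase, rpow_neg (by positivity), ← sqrt_eq_rpow, sqrt_sq (by positivity), inv_div]

theorem stmt_18 (β : ℝ) (hβ : 0 < β) :
    ∫ u in Set.Ioi (0 : ℝ),
        (2 * Real.pi * u ^ 5) ^ (-(1 / 2) : ℝ) * Real.exp (-1 / (2 * u)) * Real.exp (-β * u) =
      (1 + Real.sqrt (2 * β)) * Real.exp (-Real.sqrt (2 * β)) := by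
  obtain ⟨c, hc, rfl⟩ : ∃ c > 0, β = 2 * c ^ 2 :=
    ⟨√(β / 2), by positivity, by rw [sq_sqrt (by positivity)]; ring⟩
  have hsqrt : √(2 * (2 * c ^ 2)) = 2 * c := by
    rw [show 2 * (2 * c ^ 2) = (2 * c) ^ 2 by ring, sqrt_sq (by positivity)]
  rw [hsqrt, ← integral_comp_inv_mul_sq_Ioi two_pos]
  calc _ = ∫ t in Ioi 0, 4 * exp (-(2 * c)) / √π * (t ^ 2 * exp (-(t - c / t) ^ 2)) := by
        refine setIntegral_congr_fun measurableSet_Ioi fun t (ht : 0 < t) => ?_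
        have hexp : exp (-1 / (2 * (2 * t ^ 2)⁻¹)) * exp (-(2 * c ^ 2) * (2 * t ^ 2)⁻¹) =
            exp (-(2 * c)) * exp (-(t - c / t) ^ 2) := by
          rw [← exp_add, ← exp_add]
          congr 1
          field_simp
          ring
        rw [smul_eq_mul, two_mul_pi_mul_inv_two_mul_sq_pow_five_rpow_neg_half ht,
          mul_assoc _ (exp _), hexp]
        field_simp
    _ = _ := by
      rw [integral_const_mul, integral_sq_mul_exp_neg_sq_sub_div hc]
      field_simp
end
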